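/- Let ℓ ≥ 2, let k ∈ ℕ^ℓ with each k_i ≥ 1, set K = {(i,j) : i ≤ ℓ, j ≤ k_i}, and let α ∈ ℝ_-^K satisfy: for each i, α_{ij} > -d for all j ≤ k_i and ∑_{j≤k_i}(α_{ij}+d) < d; moreover ∑_{i≤ℓ} α_i < -d where α_i := (k_i - 1)d + ∑_{j≤k_i} α_{ij}. Let 𝒫 be the set of p ∈ (ℤ^d)^K such that ∑_{j≤k_i} p_{ij} is the same for all i ≤ ℓ. Then ∑_{p∈𝒫} ∏_{(i,j)∈K} ⟨p_{ij}⟩^{α_{ij}} < ∞. -/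

import Mathlib

/-- The Japanese bracket `⟨x⟩ = (1 + |x|²)^{1/2}` of a lattice point `x ∈ ℤ^d`. -/
noncomputable def jbracket {d : ℕ} (l : Fin d → ℤ) : ℝ :=
  (1 + ∑ r, ((l r : ℝ)) ^ 2) ^ ((1 : ℝ) / 2)

/-!
Fixing the common row sum `m`, row `i` contributes the `k i`-fold convolution of the weights
`⟨·⟩^{α i j}` evaluated at `m`. Since `⟨m⟩ ≤ 2 max ⟨q⟩ ⟨m - q⟩`, the convolution of `⟨·⟩^a` and
`⟨·⟩^b` is `O(⟨m⟩^γ)` as soon as `a, b ≤ γ ≤ 0` and `a + b + d < γ`. Iterating, row `i` is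
`O(⟨m⟩^{θ i})` with `θ i = ∑ j, α i j + (k i - 1) (d + ε)`, and `θ i ≤ 0` for small `ε > 0` by the
row condition. The product of the rows is then `O(⟨m⟩^{∑ i, θ i})` with `∑ i, θ i < -d`, which is
summable over `ℤ^d`. All sums are taken in `ℝ≥0∞`, so no summability bookkeeping is needed.
-/

open scoped ENNReal
open Filter Topology

namespace LoopLemma

variable {d : ℕ}

lemma jbracket_sq (x : Fin d → ℤ) : jbracket x ^ 2 = 1 + ∑ r, (x r : ℝ) ^ 2 := by
  rw [jbracket, ← Real.rpow_natCast, ← Real.rpow_mul (by positivity)]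
  norm_num

lemma jbracket_pos (x : Fin d → ℤ) : 0 < jbracket x :=
  Real.rpow_pos_of_pos (by positivity) _

lemma jbracket_zero : jbracket (0 : Fin d → ℤ) = 1 := by
  simp [jbracket]

lemma jbracket_le_two_mul_max (q m : Fin d → ℤ) :
    jbracket m ≤ 2 * max (jbracket q) (jbracket (m - q)) := by
  have hcoord : ∀ r, (m r : ℝ) ^ 2 ≤ 2 * (q r : ℝ) ^ 2 + 2 * ((m - q) r : ℝ) ^ 2 := fun r => by
    push_cast [Pi.sub_apply]
    nlinarith [sq_nonneg ((m r : ℝ) - 2 * q r)]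
  have hsq : jbracket m ^ 2 ≤ 2 * jbracket q ^ 2 + 2 * jbracket (m - q) ^ 2 := by
    simp only [jbracket_sq]
    have := Finset.sum_le_sum fun r (_ : r ∈ Finset.univ) => hcoord r
    rw [Finset.sum_add_distrib, ← Finset.mul_sum, ← Finset.mul_sum] at this
    linarith
  have hq := (jbracket_pos q).le
  have hmq := (jbracket_pos (m - q)).le
  rw [← pow_le_pow_iff_left₀ (jbracket_pos m).le (by positivity) two_ne_zero]
  nlinarith [le_max_left (jbracket q) (jbracket (m - q)),
    le_max_right (jbracket q) (jbracket (m - q))]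

lemma rpow_mul_rpow_le {X Y Z a b γ : ℝ} (hX : 0 < X) (hY : 0 < Y) (hZ : 0 < Z)
    (hZXY : Z ≤ max X Y) (hγ : γ ≤ 0) (ha : a ≤ γ) (hb : b ≤ γ) :
    X ^ a * Y ^ b ≤ Z ^ γ * (X ^ (a + b - γ) + Y ^ (a + b - γ)) := by
  wlog hYX : Y ≤ X generalizing X Y a b
  · have := this hY hX (max_comm X Y ▸ hZXY) hb ha (le_of_not_ge hYX)
    rwa [mul_comm, add_comm (Y ^ _), add_comm b] at this
  have hZX : Z ≤ X := hZXY.trans_eq (max_eq_left hYX)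
  calc X ^ a * Y ^ b = X ^ γ * (X ^ (a - γ) * Y ^ b) := by
        rw [← mul_assoc, ← Real.rpow_add hX, add_sub_cancel]
  _ ≤ Z ^ γ * (Y ^ (a - γ) * Y ^ b) := by
        gcongr ?_ * (?_ * _)
        · exact Real.rpow_le_rpow_of_nonpos hZ hZX hγ
        · exact Real.rpow_le_rpow_of_nonpos hY hYX (sub_nonpos.2 ha)
  _ = Z ^ γ * Y ^ (a + b - γ) := by
        rw [← Real.rpow_add hY]; ring_nf
  _ ≤ Z ^ γ * (X ^ (a + b - γ) + Y ^ (a + b - γ)) := by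
        gcongr; exact le_add_of_nonneg_left (by positivity)

lemma summable_one_add_sq_rpow {t : ℝ} (ht : t < -(1 / 2)) :
    Summable fun z : ℤ => (1 + (z : ℝ) ^ 2) ^ t := by
  have hdom : Summable fun z : ℤ => |(z : ℝ)| ^ (2 * t) := by
    simpa using Real.summable_abs_int_rpow (b := -(2 * t)) (by linarith)
  refine (Finset.summable_compl_iff {0}).mp <|
    (hdom.subtype _).of_nonneg_of_le (fun _ => by positivity) fun ⟨z, hz⟩ => ?_
  have hz : (z : ℝ) ≠ 0 := by simpa using hz
  calc (1 + (z : ℝ) ^ 2) ^ t ≤ ((z : ℝ) ^ 2) ^ t :=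
        Real.rpow_le_rpow_of_nonpos (by positivity) (by linarith) (by linarith)
  _ = |(z : ℝ)| ^ (2 * t) := by
        rw [← sq_abs, ← Real.rpow_natCast, ← Real.rpow_mul (abs_nonneg _)]
        norm_num

lemma tsum_fin_pi_prod {n : ℕ} {β : Fin n → Type*} (f : ∀ i, β i → ℝ≥0∞) :
    ∑' v : (∀ i, β i), ∏ i, f i (v i) = ∏ i, ∑' x, f i x := by
  induction n with
  | zero => simp
  | succ n ih =>
    rw [← (Fin.consEquiv β).tsum_eq, ENNReal.tsum_prod', Fin.prod_univ_succ]
    simp only [Fin.consEquiv_apply, Fin.prod_univ_succ, Fin.cons_zero, Fin.cons_succ,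
      ENNReal.tsum_mul_left, ENNReal.tsum_mul_right]
    rw [ih fun i => f i.succ]

noncomputable def jpow (s : ℝ) (x : Fin d → ℤ) : ℝ≥0∞ :=
  ENNReal.ofReal (jbracket x ^ s)

lemma jpow_apply_zero (s : ℝ) : jpow s (0 : Fin d → ℤ) = 1 := by
  simp [jpow, jbracket_zero]

lemma prod_jpow {ι : Type*} [Fintype ι] (θ : ι → ℝ) (x : Fin d → ℤ) :
    ∏ i, jpow (θ i) x = jpow (∑ i, θ i) x := by
  rw [jpow, Real.rpow_sum_of_pos (jbracket_pos x),
    ENNReal.ofReal_prod_of_nonneg fun i _ => Real.rpow_nonneg (jbracket_pos x).le _]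
  rfl

lemma jbracket_rpow_le_prod {s : ℝ} (hd : d ≠ 0) (hs : s ≤ 0) (x : Fin d → ℤ) :
    jbracket x ^ s ≤ ∏ r, (1 + (x r : ℝ) ^ 2) ^ (s / (2 * d)) := by
  set S := ∑ r, (x r : ℝ) ^ 2
  have hS : 0 ≤ S := by positivity
  have hexp : jbracket x ^ s = ∏ _r : Fin d, (1 + S) ^ (s / (2 * d)) := by
    rw [Finset.prod_const, Finset.card_univ, Fintype.card_fin,
      ← Real.rpow_mul_natCast (by positivity), jbracket, ← Real.rpow_mul (by positivity)]
    congr 1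
    field_simp
  rw [hexp]
  refine Finset.prod_le_prod (fun _ _ => by positivity) fun r _ => Real.rpow_le_rpow_of_nonpos
    (by positivity) ?_ (div_nonpos_of_nonpos_of_nonneg hs (by positivity))
  have := Finset.single_le_sum (fun r _ => sq_nonneg (x r : ℝ)) (Finset.mem_univ r)
  linarith

lemma tsum_jpow_ne_top {s : ℝ} (hs : s < -d) : ∑' x : Fin d → ℤ, jpow s x ≠ ⊤ := by
  rcases eq_or_ne d 0 with rfl | hd
  · simp [jpow]
  have hd' : (0 : ℝ) < d := by positivity
  set t := s / (2 * d)
  have ht : t < -(1 / 2) := by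
    rw [div_lt_iff₀ (by positivity)]; linarith
  have hline := (summable_one_add_sq_rpow ht).tsum_ofReal_ne_top
  have hbound : ∀ x : Fin d → ℤ, jpow s x ≤ ∏ r, ENNReal.ofReal ((1 + (x r : ℝ) ^ 2) ^ t) :=
    fun x => by
      rw [jpow, ← ENNReal.ofReal_prod_of_nonneg fun _ _ => by positivity]
      exact ENNReal.ofReal_le_ofReal (jbracket_rpow_le_prod hd (by linarith) x)
  refine ne_top_of_le_ne_top ?_ (ENNReal.tsum_le_tsum hbound)
  rw [tsum_fin_pi_prod fun (_ : Fin d) (z : ℤ) => ENNReal.ofReal ((1 + (z : ℝ) ^ 2) ^ t)]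
  exact ENNReal.prod_ne_top fun _ _ => hline

lemma exists_tsum_jpow_mul_jpow_sub_le {a b γ : ℝ} (ha : a ≤ γ) (hb : b ≤ γ) (hγ : γ ≤ 0)
    (habγ : a + b + d < γ) :
    ∃ C : ℝ≥0∞, C ≠ ⊤ ∧ ∀ m : Fin d → ℤ, ∑' q, jpow a q * jpow b (m - q) ≤ C * jpow γ m := by
  set c := a + b - γ
  set T := ∑' x : Fin d → ℤ, jpow c x
  have hT : T ≠ ⊤ := tsum_jpow_ne_top (by linarith)
  refine ⟨ENNReal.ofReal (2 ^ (-γ)) * (2 * T), by finiteness, fun m => ?_⟩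
  have hpoint : ∀ q, jpow a q * jpow b (m - q) ≤
      ENNReal.ofReal ((jbracket m / 2) ^ γ) * (jpow c q + jpow c (m - q)) := fun q => by
    have hq := jbracket_pos q
    have hmq := jbracket_pos (m - q)
    have hm := jbracket_pos m
    simp only [jpow]
    rw [← ENNReal.ofReal_mul (by positivity),
      ← ENNReal.ofReal_add (by positivity) (by positivity), ← ENNReal.ofReal_mul (by positivity)]
    refine ENNReal.ofReal_le_ofReal (rpow_mul_rpow_le hq hmq (by positivity) ?_ hγ ha hb)
    linarith [jbracket_le_two_mul_max q m]
  have hshift : ∑' q, jpow c (m - q) = T := (Equiv.subLeft m).tsum_eq (jpow c)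
  calc ∑' q, jpow a q * jpow b (m - q)
      ≤ ∑' q, ENNReal.ofReal ((jbracket m / 2) ^ γ) * (jpow c q + jpow c (m - q)) :=
        ENNReal.tsum_le_tsum hpoint
  _ = ENNReal.ofReal ((jbracket m / 2) ^ γ) * (2 * T) := by
        rw [ENNReal.tsum_mul_left, ENNReal.tsum_add, hshift, two_mul]
  _ = ENNReal.ofReal (2 ^ (-γ)) * (2 * T) * jpow γ m := by
        rw [Real.div_rpow (jbracket_pos m).le zero_le_two, div_eq_inv_mul,
          ← Real.rpow_neg zero_le_two, ENNReal.ofReal_mul (by positivity), jpow]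
        ring

section Convolution

variable {M : Type*} [AddCommMonoid M] [DecidableEq M]

noncomputable def iterConv {n : ℕ} (w : Fin n → M → ℝ≥0∞) (m : M) : ℝ≥0∞ :=
  ∑' v : Fin n → M, if ∑ j, v j = m then ∏ j, w j (v j) else 0

lemma iterConv_zero (w : Fin 0 → M → ℝ≥0∞) (m : M) :
    iterConv w m = if 0 = m then 1 else 0 := by
  simp [iterConv]

lemma iterConv_succ {G : Type*} [AddCommGroup G] [DecidableEq G] {n : ℕ}
    (w : Fin (n + 1) → G → ℝ≥0∞) (m : G) :
    iterConv w m = ∑' q, w 0 q * iterConv (Fin.tail w) (m - q) := by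
  rw [iterConv, ← (Fin.consEquiv fun _ => G).tsum_eq, ENNReal.tsum_prod']
  refine tsum_congr fun q => ?_
  rw [iterConv, ← ENNReal.tsum_mul_left]
  refine tsum_congr fun v => ?_
  simp only [Fin.consEquiv_apply, Fin.sum_univ_succ, Fin.prod_univ_succ, Fin.cons_zero,
    Fin.cons_succ, Fin.tail, ← eq_sub_iff_add_eq', mul_ite, mul_zero]

lemma tsum_equalRowSums_le {ℓ : ℕ} (i₀ : Fin ℓ) {k : Fin ℓ → ℕ}
    (w : (Σ i, Fin (k i)) → M → ℝ≥0∞) :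
    ∑' p : {p : (Σ i, Fin (k i)) → M // ∀ i i', ∑ j, p ⟨i, j⟩ = ∑ j, p ⟨i', j⟩},
        ∏ s, w s (p.1 s) ≤
      ∑' m : M, ∏ i, iterConv (fun j => w ⟨i, j⟩) m := by
  let g : M × (∀ i, Fin (k i) → M) → ℝ≥0∞ := fun t =>
    ∏ i, if ∑ j, t.2 i j = t.1 then ∏ j, w ⟨i, j⟩ (t.2 i j) else 0
  let rows : {p : (Σ i, Fin (k i)) → M // ∀ i i', ∑ j, p ⟨i, j⟩ = ∑ j, p ⟨i', j⟩} →
      M × (∀ i, Fin (k i) → M) := fun p => (∑ j, p.1 ⟨i₀, j⟩, fun i j => p.1 ⟨i, j⟩)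
  have hrows : Function.Injective rows := fun p q h =>
    Subtype.ext <| funext fun s => congr_fun (congr_fun (congr_arg Prod.snd h) s.1) s.2
  calc ∑' p : {p : (Σ i, Fin (k i)) → M // ∀ i i', ∑ j, p ⟨i, j⟩ = ∑ j, p ⟨i', j⟩},
        ∏ s, w s (p.1 s)
      = ∑' p, g (rows p) := tsum_congr fun p => by
        rw [← Finset.univ_sigma_univ, Finset.prod_sigma]
        exact Finset.prod_congr rfl fun i _ => (if_pos (p.2 i i₀)).symm
  _ ≤ ∑' t, g t := ENNReal.tsum_comp_le_tsum_of_injective hrows g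
  _ = ∑' m : M, ∏ i, iterConv (fun j => w ⟨i, j⟩) m := by
        rw [ENNReal.tsum_prod']
        exact tsum_congr fun m => tsum_fin_pi_prod fun i (v : Fin (k i) → M) =>
          if ∑ j, v j = m then ∏ j, w ⟨i, j⟩ (v j) else 0

end Convolution

lemma exists_iterConv_jpow_le {ε : ℝ} (hε : 0 < ε) {n : ℕ} (a : Fin n → ℝ)
    (ha : ∀ j, -(d : ℝ) ≤ a j) (hθ : ∑ j, a j + ((n : ℝ) - 1) * (d + ε) ≤ 0) :
    ∃ C : ℝ≥0∞, C ≠ ⊤ ∧ ∀ m : Fin d → ℤ,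
      iterConv (fun j => jpow (a j)) m ≤ C * jpow (∑ j, a j + ((n : ℝ) - 1) * (d + ε)) m := by
  induction n with
  | zero =>
    refine ⟨1, ENNReal.one_ne_top, fun m => ?_⟩
    rw [iterConv_zero, one_mul]
    split_ifs with hm
    · rw [← hm, jpow_apply_zero]
    · exact zero_le
  | succ n ih =>
    set θ := ∑ j, Fin.tail a j + ((n : ℝ) - 1) * (d + ε)
    have hsplit : ∑ j, a j + (((n + 1 : ℕ) : ℝ) - 1) * (d + ε) = a 0 + θ + (d + ε) := by
      rw [Fin.sum_univ_succ]; push_cast; simp only [θ, Fin.tail]; ring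
    have htail : 0 ≤ θ + (d + ε) := by
      have : 0 ≤ ∑ j : Fin n, (a j.succ + d) :=
        Finset.sum_nonneg fun j _ => neg_le_iff_add_nonneg.1 (ha j.succ)
      rw [Finset.sum_add_distrib, Finset.sum_const, Finset.card_univ, Fintype.card_fin,
        nsmul_eq_mul] at this
      simp only [θ, Fin.tail]; nlinarith
    obtain ⟨C, hC, hrow⟩ := ih (Fin.tail a) (fun j => ha j.succ) (by linarith [ha 0])
    obtain ⟨C', hC', hconv⟩ := exists_tsum_jpow_mul_jpow_sub_le (a := a 0) (b := θ)
      (γ := ∑ j, a j + (((n + 1 : ℕ) : ℝ) - 1) * (d + ε))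
      (by linarith) (by linarith [ha 0]) hθ (by linarith)
    refine ⟨C * C', ENNReal.mul_ne_top hC hC', fun m => ?_⟩
    rw [iterConv_succ]
    calc ∑' q, jpow (a 0) q * iterConv (Fin.tail fun j => jpow (a j)) (m - q)
        ≤ ∑' q, C * (jpow (a 0) q * jpow θ (m - q)) :=
          ENNReal.tsum_le_tsum fun q => by
            rw [mul_left_comm]; gcongr; exact hrow (m - q)
    _ ≤ C * (C' * jpow (∑ j, a j + (((n + 1 : ℕ) : ℝ) - 1) * (d + ε)) m) := by
          rw [ENNReal.tsum_mul_left]; gcongr; exact hconv m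
    _ = C * C' * jpow (∑ j, a j + (((n + 1 : ℕ) : ℝ) - 1) * (d + ε)) m :=
          (mul_assoc _ _ _).symm

lemma exists_pos_add_mul_le {ι : Type*} [Fintype ι] {A c : ι → ℝ} {B : ℝ}
    (hA : ∀ i, A i < 0) (hB : ∑ i, A i < B) :
    ∃ ε > 0, (∀ i, A i + c i * ε ≤ 0) ∧ ∑ i, (A i + c i * ε) < B := by
  have hlim : ∀ i, Tendsto (fun ε => A i + c i * ε) (𝓝[>] 0) (𝓝 (A i)) := fun i => by
    simpa using (tendsto_const_nhds.add (tendsto_id.const_mul (c i))).mono_left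
      (nhdsWithin_le_nhds (a := (0 : ℝ)) (s := Set.Ioi 0))
  have hrows : ∀ᶠ ε in 𝓝[>] 0, ∀ i, A i + c i * ε ≤ 0 :=
    eventually_all.2 fun i => ((hlim i).eventually_lt_const (hA i)).mono fun _ h => h.le
  have hsum : ∀ᶠ ε in 𝓝[>] 0, ∑ i, (A i + c i * ε) < B :=
    (tendsto_finsetSum _ fun i _ => hlim i).eventually_lt_const hB
  obtain ⟨ε, hε, hle, hlt⟩ := (eventually_mem_nhdsWithin.and (hrows.and hsum)).exists
  exact ⟨ε, hε, hle, hlt⟩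

end LoopLemma

open LoopLemma in
theorem loop_lemma_general (d : ℕ) (ℓ : ℕ)
    (k : Fin ℓ → ℕ)
    (α : (Σ i : Fin ℓ, Fin (k i)) → ℝ)
    (hα1 : ∀ s, -(d : ℝ) < α s)
    (hα2 : ∀ i : Fin ℓ, ∑ j : Fin (k i), (α ⟨i, j⟩ + d) < d)
    (hα3 : ∑ i : Fin ℓ, (((k i : ℝ) - 1) * d + ∑ j : Fin (k i), α ⟨i, j⟩) < -(d : ℝ)) :
    Summable (fun p : {p : (Σ i : Fin ℓ, Fin (k i)) → (Fin d → ℤ) //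
        ∀ i i' : Fin ℓ, (∑ j : Fin (k i), p ⟨i, j⟩) = ∑ j : Fin (k i'), p ⟨i', j⟩} =>
      ∏ s : Σ i : Fin ℓ, Fin (k i), jbracket (p.1 s) ^ α s) := by
  obtain ⟨i₀, -⟩ := Finset.nonempty_of_sum_ne_zero (hα3.trans_le (by simp)).ne
  have hrow : ∀ i, ((k i : ℝ) - 1) * d + ∑ j : Fin (k i), α ⟨i, j⟩ < 0 := fun i => by
    have := hα2 i
    rw [Finset.sum_add_distrib, Finset.sum_const, Finset.card_univ, Fintype.card_fin,
      nsmul_eq_mul] at this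
    linarith
  obtain ⟨ε, hε, hθ, hθsum⟩ := exists_pos_add_mul_le (c := fun i => (k i : ℝ) - 1) hrow hα3
  choose C hC hCrow using fun i => exists_iterConv_jpow_le hε (fun j => α ⟨i, j⟩)
    (fun j => (hα1 _).le) (by linarith [hθ i])
  have hfin : ∑' m : Fin d → ℤ, ∏ i, iterConv (fun j => jpow (α ⟨i, j⟩)) m ≠ ⊤ := by
    refine ne_top_of_le_ne_top ?_ (ENNReal.tsum_le_tsum fun m =>
      Finset.prod_le_prod' fun i _ => hCrow i m)
    simp_rw [Finset.prod_mul_distrib, prod_jpow, ENNReal.tsum_mul_left]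
    exact ENNReal.mul_ne_top (ENNReal.prod_ne_top fun i _ => hC i)
      (tsum_jpow_ne_top ((Finset.sum_congr rfl fun i _ => by ring).trans_lt hθsum))
  refine (ENNReal.summable_toReal
    (ne_top_of_le_ne_top hfin (tsum_equalRowSums_le i₀ fun s => jpow (α s)))).congr fun p => ?_
  simp only [jpow, ENNReal.toReal_prod]
  exact Finset.prod_congr rfl fun s _ =>
    ENNReal.toReal_ofReal (Real.rpow_nonneg (jbracket_pos _).le _)

/-- Loop lemma: with exponents `α_{ij} ∈ (-d, 0]` satisfying `∑_j (α_{ij}+d) < d` for each `i`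
and `∑_i α_i < -d` where `α_i = (k_i-1)d + ∑_j α_{ij}`, the sum over all families
`p ∈ (ℤ^d)^K` with equal row sums of `∏ ⟨p_{ij}⟩^{α_{ij}}` is finite. -/
theorem loop_lemma (d : ℕ) (hd : 1 ≤ d) (ℓ : ℕ) (hℓ : 2 ≤ ℓ)
    (k : Fin ℓ → ℕ) (hk : ∀ i, 1 ≤ k i)
    (α : (Σ i : Fin ℓ, Fin (k i)) → ℝ)
    (hα0 : ∀ s, α s ≤ 0)
    (hα1 : ∀ s, -(d : ℝ) < α s)
    (hα2 : ∀ i : Fin ℓ, ∑ j : Fin (k i), (α ⟨i, j⟩ + d) < d)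
    (hα3 : ∑ i : Fin ℓ, (((k i : ℝ) - 1) * d + ∑ j : Fin (k i), α ⟨i, j⟩) < -(d : ℝ)) :
    Summable (fun p : {p : (Σ i : Fin ℓ, Fin (k i)) → (Fin d → ℤ) //
        ∀ i i' : Fin ℓ, (∑ j : Fin (k i), p ⟨i, j⟩) = ∑ j : Fin (k i'), p ⟨i', j⟩} =>
      ∏ s : Σ i : Fin ℓ, Fin (k i), jbracket (p.1 s) ^ α s) :=
  loop_lemma_general d ℓ k α hα1 hα2 hα3
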